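/- arXiv:2306.06903 — 2 statements merged into one kernel-verified Lean document; each statement's English description precedes it below -/
import Mathlib

section
/- Let A be a fuzzy linear code in F_q^n with n ≥ 1. If |Im(A)| > 1 and for every γ ∈ Im(A) there exists ε ∈ Im(A) with A_γ = (A_ε)^⊥, then there exists a fuzzy linear code B in F_q^n with A ⊥ B, i.e., Im(B) = {1 − c : c ∈ Im(A)} and B_{1−t} = (A_t)^⊥ for every t ∈ Im(A). -/
/-!
The hypothesis provides a self-map `ε` of `Im A` with `A_γ = (A_{ε γ})^⊥`. Level cuts at
values of `A` strictly shrink as the value grows and `⊥` reverses inclusion, so `ε` is strictly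
decreasing, hence a bijection of the finite set `Im A`. The code `B y = 1 - ε (A y)` is then
orthogonal to `A`: its cut at `1 - ε δ` is `A_δ = (A_{ε δ})^⊥`.
-/

open scoped BigOperators

/-- A fuzzy set in `V`: a membership function with values in `[0,1]`. -/
def IsFuzzySet {V : Type*} (A : V → ℝ) : Prop :=
  ∀ x, 0 ≤ A x ∧ A x ≤ 1

/-- The upper `α`-level cut of a fuzzy set `A`. -/
def levelCut {V : Type*} (A : V → ℝ) (α : ℝ) : Set V :=
  {x | α ≤ A x}

/-- A set of vectors is an `F`-linear subspace. -/
def IsLinearSubspaceSet (F : Type*) {V : Type*} [Field F] [AddCommGroup V] [Module F V]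
    (s : Set V) : Prop :=
  ∃ W : Submodule F V, s = (W : Set V)

/-- A fuzzy linear code: a fuzzy set all of whose nonempty upper `α`-level cuts
(for `α ∈ [0,1]`) are linear subspaces. -/
def IsFuzzyLinearCode (F : Type*) {V : Type*} [Field F] [AddCommGroup V] [Module F V]
    (A : V → ℝ) : Prop :=
  IsFuzzySet A ∧
    ∀ α ∈ Set.Icc (0 : ℝ) 1, (levelCut A α).Nonempty → IsLinearSubspaceSet F (levelCut A α)

/-- The Euclidean dual of a set of vectors in `F^n`. -/
def dualSet {F : Type*} [Field F] {n : ℕ} (S : Set (Fin n → F)) : Set (Fin n → F) :=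
  {y | ∀ x ∈ S, ∑ i, x i * y i = 0}

/-- `B` is orthogonal to `A` (written `A ⊥ B`): the image of `B` is
`{1 - c : c ∈ Im A}` and `B_{1-t} = (A_t)^⊥` for every `t ∈ Im A`. -/
def FuzzyOrth {F : Type*} [Field F] {n : ℕ} (A B : (Fin n → F) → ℝ) : Prop :=
  Set.range B = (fun c => 1 - c) '' Set.range A ∧
    ∀ t ∈ Set.range A, levelCut B (1 - t) = dualSet (levelCut A t)

open Set Function

section LevelCut

variable {V : Type*}

lemma levelCut_anti (A : V → ℝ) : Antitone (levelCut A) :=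
  fun _ _ h _ hx => h.trans hx

lemma exists_mem_range_levelCut_eq {f : V → ℝ} (hf : (range f).Finite) {α : ℝ}
    (hne : (levelCut f α).Nonempty) : ∃ t ∈ range f, levelCut f α = levelCut f t := by
  obtain ⟨y, hy⟩ := hne
  obtain ⟨t, ⟨ht, hαt⟩, hmin⟩ := {s ∈ range f | α ≤ s}.exists_min_image id
    (hf.subset (sep_subset _ _)) ⟨f y, mem_range_self y, hy⟩
  exact ⟨t, ht, Set.ext fun x => ⟨fun hx => hmin (f x) ⟨mem_range_self x, hx⟩, hαt.trans⟩⟩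

def dualFuzzySet (A : V → ℝ) (ε : range A → range A) (y : V) : ℝ :=
  1 - ε (rangeFactorization A y)

lemma range_dualFuzzySet {A : V → ℝ} {ε : range A → range A} (hε : Surjective ε) :
    range (dualFuzzySet A ε) = (fun c => 1 - c) '' range A := by
  have hval : range (fun y => (ε (rangeFactorization A y) : ℝ)) = range A := by
    change range (Subtype.val ∘ ε ∘ rangeFactorization A) = _
    rw [range_comp, (hε.comp rangeFactorization_surjective).range_eq, image_univ,
      Subtype.range_coe]
  rw [← hval, ← range_comp]
  rfl

lemma levelCut_dualFuzzySet {A : V → ℝ} {ε : range A → range A} (hε : StrictAnti ε)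
    (δ : range A) : levelCut (dualFuzzySet A ε) (1 - ε δ) = levelCut A δ := by
  ext y
  simp only [levelCut, dualFuzzySet, mem_ofPred_eq, sub_le_sub_iff_left, Subtype.coe_le_coe,
    hε.le_iff_ge, ← rangeFactorization_coe A y]

end LevelCut

section Dual

variable {F : Type*} [Field F] {n : ℕ}

lemma dualSet_anti : Antitone (dualSet : Set (Fin n → F) → Set (Fin n → F)) :=
  fun _ _ h _ hy x hx => hy x (h hx)

lemma isLinearSubspaceSet_dualSet (S : Set (Fin n → F)) : IsLinearSubspaceSet F (dualSet S) := by
  refine ⟨{ carrier := dualSet S, add_mem' := ?_, zero_mem' := ?_, smul_mem' := ?_ }, rfl⟩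
  · intro a b ha hb x hx
    have ha' : x ⬝ᵥ a = 0 := ha x hx
    have hb' : x ⬝ᵥ b = 0 := hb x hx
    change x ⬝ᵥ (a + b) = 0
    rw [dotProduct_add, ha', hb', add_zero]
  · intro x _
    exact dotProduct_zero x
  · intro c y hy x hx
    have hy' : x ⬝ᵥ y = 0 := hy x hx
    change x ⬝ᵥ (c • y) = 0
    rw [dotProduct_smul, hy', smul_zero]

lemma strictAnti_of_levelCut_eq_dualSet {A : (Fin n → F) → ℝ} {ε : range A → range A}
    (hε : ∀ γ : range A, levelCut A γ = dualSet (levelCut A (ε γ))) : StrictAnti ε := by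
  intro a b hab
  by_contra! hle
  have hsub : levelCut A a ⊆ levelCut A b := by
    rw [hε a, hε b]
    exact dualSet_anti (levelCut_anti A hle)
  obtain ⟨x, hx⟩ := a.2
  have hbx : (b : ℝ) ≤ A x := hsub hx.ge
  exact (hx ▸ hbx).not_gt hab

lemma fuzzyOrth_dualFuzzySet [Finite F] {A : (Fin n → F) → ℝ} {ε : range A → range A}
    (hε : ∀ γ : range A, levelCut A γ = dualSet (levelCut A (ε γ))) :
    FuzzyOrth A (dualFuzzySet A ε) := by
  have hanti := strictAnti_of_levelCut_eq_dualSet hε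
  have hsurj : Surjective ε := Finite.surjective_of_injective hanti.injective
  refine ⟨range_dualFuzzySet hsurj, fun t ht => ?_⟩
  obtain ⟨δ, hδ⟩ := hsurj ⟨t, ht⟩
  obtain rfl : (ε δ : ℝ) = t := congrArg Subtype.val hδ
  rw [levelCut_dualFuzzySet hanti, hε]

lemma isFuzzyLinearCode_of_fuzzyOrth [Finite F] {A B : (Fin n → F) → ℝ} (hA : IsFuzzySet A)
    (h : FuzzyOrth A B) : IsFuzzyLinearCode F B := by
  obtain ⟨hrange, hcut⟩ := h
  refine ⟨fun y => ?_, fun α _ hne => ?_⟩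
  · obtain ⟨_, ⟨x, rfl⟩, hx⟩ := hrange ▸ mem_range_self y
    have := hA x
    constructor <;> linarith
  · obtain ⟨t, ht, hαt⟩ := exists_mem_range_levelCut_eq (finite_range B) hne
    obtain ⟨c, hc, rfl⟩ := hrange ▸ ht
    rw [hαt, hcut c hc]
    exact isLinearSubspaceSet_dualSet _

end Dual

theorem exists_orthogonal_fuzzyLinearCode_general
    {F : Type} [Field F] [Fintype F] {n : ℕ}
    (A : (Fin n → F) → ℝ) (hA : IsFuzzyLinearCode F A)
    (hdual : ∀ γ ∈ Set.range A, ∃ ε ∈ Set.range A, levelCut A γ = dualSet (levelCut A ε)) :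
    ∃ B : (Fin n → F) → ℝ, IsFuzzyLinearCode F B ∧ FuzzyOrth A B := by
  choose ε hεA hε using fun γ : range A => hdual γ γ.2
  have hB := fuzzyOrth_dualFuzzySet (ε := fun γ => ⟨ε γ, hεA γ⟩) hε
  exact ⟨_, isFuzzyLinearCode_of_fuzzyOrth hA.1 hB, hB⟩

/-- if a fuzzy linear code `A` in `F_q^n` has `|Im A| > 1` and every
`γ ∈ Im A` satisfies `A_γ = (A_ε)^⊥` for some `ε ∈ Im A`, then there is a fuzzy linear
code `B` with `A ⊥ B`. -/
theorem exists_orthogonal_fuzzyLinearCode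
    {F : Type} [Field F] [Fintype F] {n : ℕ} (hn : 0 < n)
    (A : (Fin n → F) → ℝ) (hA : IsFuzzyLinearCode F A)
    (him : 1 < (Set.range A).ncard)
    (hdual : ∀ γ ∈ Set.range A, ∃ ε ∈ Set.range A, levelCut A γ = dualSet (levelCut A ε)) :
    ∃ B : (Fin n → F) → ℝ, IsFuzzyLinearCode F B ∧ FuzzyOrth A B :=
  exists_orthogonal_fuzzyLinearCode_general A hA hdual
end

section
/- Let n ≥ 1 and let C ⊆ F_q^{2n} be a self-dual linear code (C = C^⊥, so dim C = n). Let s_1, …, s_n be a basis of C, set S_0 = {0} and S_i = span(s_1, …, s_i) for 1 ≤ i ≤ n (so S_n = C). Let α_0, α_1, …, α_n be reals with 1 ≥ α_0 > α_1 > ⋯ > α_{n−1} > α_n = 1/2. Define A : F_q^{2n} → ℝ by A(0) = α_0, A(x) = α_i for x ∈ S_i ∖ S_{i−1} (1 ≤ i ≤ n), and A(x) = 1 − α_i for x ∈ S_i^⊥ ∖ S_{i+1}^⊥ (0 ≤ i ≤ n−1); since S_0^⊥ = F_q^{2n} and S_n^⊥ = C, this defines A on all of F_q^{2n}. Then A is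 a fuzzy self-dual code in F_q^{2n}; moreover A_{α_i} = S_i and A_{1−α_i} = S_i^⊥ for all 0 ≤ i ≤ n. -/
open scoped BigOperators

/-- A fuzzy self-orthogonal code: a fuzzy linear code with `|Im A| > 1` such that
`(A_{1-α})^⊥ = A_α` for every `α ∈ Im A`. -/
def IsFuzzySelfOrthogonal {F : Type*} [Field F] {n : ℕ} (A : (Fin n → F) → ℝ) : Prop :=
  IsFuzzyLinearCode F A ∧ 1 < (Set.range A).ncard ∧
    ∀ α ∈ Set.range A, dualSet (levelCut A (1 - α)) = levelCut A α

/-- A fuzzy self-dual code: a fuzzy self-orthogonal code such that `(A_β)^⊥ = A_β`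
for some `β ∈ Im A`. -/
def IsFuzzySelfDual {F : Type*} [Field F] {n : ℕ} (A : (Fin n → F) → ℝ) : Prop :=
  IsFuzzySelfOrthogonal A ∧ ∃ β ∈ Set.range A, dualSet (levelCut A β) = levelCut A β

/-! The level cuts of `A` are the members of the single chain
`S 0 ≤ ⋯ ≤ S n = C = (S n)ᗮ ≤ ⋯ ≤ (S 0)ᗮ = F ^ (2 * n)`, along which the membership degrees
`α 0 > ⋯ > α n = 1 / 2 > 1 - α (n - 1) > ⋯ > 1 - α 0` strictly decrease; so every nonempty level
cut is a member of the chain, hence a subspace. Reversing the chain exchanges each subspace with its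
dual and each degree `β` with `1 - β`, which is fuzzy self-orthogonality, and the middle member
`C`, of degree `1 / 2`, is self-dual. -/

open Set
open LinearMap (BilinForm)

section DotProduct

variable {F : Type*} [Field F] {m : ℕ}

lemma dotProductBilin_nondegenerate :
    BilinForm.Nondegenerate (dotProductBilin F F : BilinForm F (Fin m → F)) :=
  ⟨fun x hx => dotProduct_eq_zero x hx,
    fun y hy => dotProduct_eq_zero y fun x => by simpa [dotProduct_comm] using hy x⟩

lemma dotProductBilin_isRefl :
    BilinForm.IsRefl (dotProductBilin F F : BilinForm F (Fin m → F)) :=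
  fun x y h => by simpa [dotProduct_comm] using h

lemma dualSet_eq_orthogonal (W : Submodule F (Fin m → F)) :
    dualSet (W : Set (Fin m → F)) = BilinForm.orthogonal (dotProductBilin F F) W := by
  ext y
  simp [dualSet, BilinForm.mem_orthogonal_iff, dotProduct]

end DotProduct

lemma exists_levelCut_eq_levelCut_apply {V : Type*} {A : V → ℝ} (hA : (range A).Finite)
    {γ : ℝ} (hγ : (levelCut A γ).Nonempty) : ∃ x, levelCut A γ = levelCut A (A x) := by
  obtain ⟨x, hx⟩ := hγ
  obtain ⟨_, ⟨⟨y, rfl⟩, hγy⟩, hmin⟩ := exists_min_image (range A ∩ Ici γ) id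
    (hA.subset inter_subset_left) ⟨A x, mem_range_self x, hx⟩
  exact ⟨y, Set.ext fun z =>
    ⟨fun hz => hmin _ ⟨mem_range_self z, hz⟩, fun hz => le_trans (b := A y) hγy hz⟩⟩

def HasLevelCuts {V : Type*} (A : V → ℝ) (β : ℕ → ℝ) (T : ℕ → Set V) (N : ℕ) : Prop :=
  range A ⊆ β '' Iic N ∧ ∀ k ≤ N, levelCut A (β k) = T k

section StepFunction

variable {V : Type*} {T : ℕ → Set V} {β : ℕ → ℝ} {A : V → ℝ} {N : ℕ}

lemma exists_apply_eq_of_step (hT : Monotone T) (hTN : T N = univ)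
    (hA : ∀ k ≤ N, ∀ x ∈ T k, (∀ j < k, x ∉ T j) → A x = β k) (x : V) :
    ∃ k ≤ N, A x = β k ∧ ∀ j, x ∈ T j ↔ k ≤ j := by
  classical
  have hx : ∃ k, x ∈ T k := ⟨N, hTN ▸ mem_univ x⟩
  have hkN : Nat.find hx ≤ N := Nat.find_min' hx (hTN ▸ mem_univ x)
  exact ⟨Nat.find hx, hkN, hA _ hkN x (Nat.find_spec hx) fun j => Nat.find_min hx,
    fun j => ⟨Nat.find_min' hx, fun h => hT h (Nat.find_spec hx)⟩⟩

lemma hasLevelCuts_of_step (hT : Monotone T) (hTN : T N = univ) (hβ : StrictAntiOn β (Iic N))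
    (hA : ∀ k ≤ N, ∀ x ∈ T k, (∀ j < k, x ∉ T j) → A x = β k) : HasLevelCuts A β T N := by
  refine ⟨?_, fun i hi => ?_⟩
  · rintro _ ⟨x, rfl⟩
    obtain ⟨k, hk, hAx, -⟩ := exists_apply_eq_of_step hT hTN hA x
    exact ⟨k, hk, hAx.symm⟩
  · ext x
    obtain ⟨k, hk, hAx, hxT⟩ := exists_apply_eq_of_step hT hTN hA x
    change β i ≤ A x ↔ x ∈ T i
    rw [hAx, hxT, hβ.le_iff_ge (mem_Iic.2 hi) (mem_Iic.2 hk)]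

end StepFunction

section SelfDualChain

variable {K V : Type*} [Field K] [AddCommGroup V] [Module K V]

/-- The chain `S 0 ≤ ⋯ ≤ S n = (S n)ᗮ ≤ (S (n - 1))ᗮ ≤ ⋯ ≤ (S 0)ᗮ`, indexed by `0, …, 2 * n`. -/
def selfDualChain (B : BilinForm K V) (n : ℕ) (S : ℕ → Submodule K V) (k : ℕ) : Submodule K V :=
  if k ≤ n then S k else B.orthogonal (S (2 * n - k))

def selfDualChainValue (α : ℕ → ℝ) (n k : ℕ) : ℝ :=
  if k ≤ n then α k else 1 - α (2 * n - k)

variable {B : BilinForm K V} {n : ℕ} {S : ℕ → Submodule K V} {α : ℕ → ℝ} {A : V → ℝ}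

lemma selfDualChain_of_le {i : ℕ} (hi : i ≤ n) : selfDualChain B n S i = S i :=
  if_pos hi

lemma selfDualChain_two_mul_sub (hSn : B.orthogonal (S n) = S n) {i : ℕ} (hi : i ≤ n) :
    selfDualChain B n S (2 * n - i) = B.orthogonal (S i) := by
  unfold selfDualChain
  split_ifs with h
  · obtain rfl : i = n := by omega
    rw [show 2 * i - i = i by omega, hSn]
  · rw [Nat.sub_sub_self (by omega)]

lemma selfDualChain_two_mul (hS0 : S 0 = ⊥) (hSn : B.orthogonal (S n) = S n) :
    selfDualChain B n S (2 * n) = ⊤ := by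
  simpa [hS0] using selfDualChain_two_mul_sub hSn (Nat.zero_le n)

lemma selfDualChain_monotone (hS : MonotoneOn S (Iic n)) (hSn : B.orthogonal (S n) = S n) :
    Monotone (selfDualChain B n S) := by
  intro k l hkl
  unfold selfDualChain
  split_ifs with hk hl hl
  · exact hS hk hl hkl
  · calc S k ≤ S n := hS hk self_mem_Iic hk
      _ = B.orthogonal (S n) := hSn.symm
      _ ≤ B.orthogonal (S (2 * n - l)) :=
        B.orthogonal_le (hS (mem_Iic.2 (by omega)) self_mem_Iic (by omega))
  · omega
  · exact B.orthogonal_le (hS (mem_Iic.2 (by omega)) (mem_Iic.2 (by omega)) (by omega))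

lemma orthogonal_selfDualChain [FiniteDimensional K V] (hB : B.Nondegenerate) (hB₀ : B.IsRefl)
    (hSn : B.orthogonal (S n) = S n) {k : ℕ} (hk : k ≤ 2 * n) :
    B.orthogonal (selfDualChain B n S (2 * n - k)) = selfDualChain B n S k := by
  rcases le_total k n with hkn | hnk
  · rw [selfDualChain_two_mul_sub hSn hkn, B.orthogonal_orthogonal hB hB₀,
      selfDualChain_of_le hkn]
  · rw [selfDualChain_of_le (by omega), selfDualChain]
    split_ifs with h
    · obtain rfl : k = n := by omega
      rw [show 2 * k - k = k by omega, hSn]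
    · rfl

lemma apply_eq_of_selfDualChain (hSn : B.orthogonal (S n) = S n)
    (hA0 : ∀ x ∈ S 0, A x = α 0)
    (hAmid : ∀ i, 1 ≤ i → i ≤ n → ∀ x ∈ S i, x ∉ S (i - 1) → A x = α i)
    (hAdual : ∀ i, i + 1 ≤ n → ∀ x ∈ B.orthogonal (S i), x ∉ B.orthogonal (S (i + 1)) →
      A x = 1 - α i) :
    ∀ k ≤ 2 * n, ∀ x ∈ selfDualChain B n S k, (∀ j < k, x ∉ selfDualChain B n S j) →
      A x = selfDualChainValue α n k := by
  intro k hk x hx hmin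
  unfold selfDualChainValue
  split_ifs with hkn
  · rw [selfDualChain_of_le hkn] at hx
    rcases Nat.eq_zero_or_pos k with rfl | hk0
    · exact hA0 x hx
    · have hx' := hmin (k - 1) (by omega)
      rw [selfDualChain_of_le (by omega)] at hx'
      exact hAmid k hk0 hkn x hx hx'
  · have hx' := hmin (k - 1) (by omega)
    rw [show k - 1 = 2 * n - (2 * n - k + 1) by omega, selfDualChain_two_mul_sub hSn (by omega)]
      at hx'
    rw [show k = 2 * n - (2 * n - k) by omega, selfDualChain_two_mul_sub hSn (by omega)] at hx
    exact hAdual _ (by omega) x hx hx'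

lemma selfDualChainValue_of_le {i : ℕ} (hi : i ≤ n) : selfDualChainValue α n i = α i :=
  if_pos hi

lemma one_sub_selfDualChainValue (hαn : α n = 1 / 2) {k : ℕ} (hk : k ≤ 2 * n) :
    1 - selfDualChainValue α n k = selfDualChainValue α n (2 * n - k) := by
  unfold selfDualChainValue
  split_ifs with h₁ h₂ h₂
  · obtain rfl : k = n := by omega
    rw [show 2 * k - k = k by omega, hαn]
    norm_num
  · rw [Nat.sub_sub_self hk]
  · ring
  · omega

lemma selfDualChainValue_strictAntiOn (hα : ∀ i < n, α (i + 1) < α i) (hαn : α n = 1 / 2) :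
    StrictAntiOn (selfDualChainValue α n) (Iic (2 * n)) := by
  refine strictAntiOn_Iic_of_succ_lt fun k hk => ?_
  rw [Order.succ_eq_add_one]
  unfold selfDualChainValue
  split_ifs with h₁ h₂ h₂
  · exact hα k (by omega)
  · omega
  · obtain rfl : k = n := by omega
    have h := hα (k - 1) (by omega)
    rw [Nat.sub_add_cancel (by omega)] at h
    rw [show 2 * k - (k + 1) = k - 1 by omega]
    linarith
  · have h := hα (2 * n - (k + 1)) (by omega)
    rw [show 2 * n - (k + 1) + 1 = 2 * n - k by omega] at h
    linarith

lemma selfDualChainValue_mem_Icc (hα : ∀ i < n, α (i + 1) < α i) (hαn : α n = 1 / 2)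
    (hα0 : α 0 ≤ 1) {k : ℕ} (hk : k ≤ 2 * n) : selfDualChainValue α n k ∈ Icc 0 1 := by
  have hβ := selfDualChainValue_strictAntiOn hα hαn
  have hle0 := hβ.antitoneOn (mem_Iic.2 (Nat.zero_le _)) hk (Nat.zero_le k)
  have hleN := hβ.antitoneOn hk self_mem_Iic (mem_Iic.1 hk)
  have hβN := one_sub_selfDualChainValue hαn (Nat.zero_le (2 * n))
  rw [Nat.sub_zero, selfDualChainValue_of_le (Nat.zero_le n)] at hβN
  rw [selfDualChainValue_of_le (Nat.zero_le n)] at hle0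
  rw [← hβN] at hleN
  constructor <;> linarith

lemma hasLevelCuts_selfDualChain (hS : MonotoneOn S (Iic n))
    (hS0 : S 0 = ⊥) (hSn : B.orthogonal (S n) = S n)
    (hα : ∀ i < n, α (i + 1) < α i) (hαn : α n = 1 / 2)
    (hA0 : ∀ x ∈ S 0, A x = α 0)
    (hAmid : ∀ i, 1 ≤ i → i ≤ n → ∀ x ∈ S i, x ∉ S (i - 1) → A x = α i)
    (hAdual : ∀ i, i + 1 ≤ n → ∀ x ∈ B.orthogonal (S i), x ∉ B.orthogonal (S (i + 1)) →
      A x = 1 - α i) :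
    HasLevelCuts A (selfDualChainValue α n) (fun k => selfDualChain B n S k) (2 * n) :=
  hasLevelCuts_of_step (SetLike.coe_mono.comp (selfDualChain_monotone hS hSn))
    (by rw [selfDualChain_two_mul hS0 hSn, Submodule.top_coe])
    (selfDualChainValue_strictAntiOn hα hαn) (apply_eq_of_selfDualChain hSn hA0 hAmid hAdual)

lemma HasLevelCuts.levelCut_eq_of_le
    (hAT : HasLevelCuts A (selfDualChainValue α n) (fun k => selfDualChain B n S k) (2 * n))
    {i : ℕ} (hi : i ≤ n) : levelCut A (α i) = S i := by
  rw [← selfDualChainValue_of_le (α := α) hi, hAT.2 i (by omega)]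
  exact congrArg _ (selfDualChain_of_le hi)

lemma HasLevelCuts.levelCut_one_sub_eq_orthogonal (hSn : B.orthogonal (S n) = S n)
    (hαn : α n = 1 / 2)
    (hAT : HasLevelCuts A (selfDualChainValue α n) (fun k => selfDualChain B n S k) (2 * n))
    {i : ℕ} (hi : i ≤ n) : levelCut A (1 - α i) = B.orthogonal (S i) := by
  rw [← selfDualChainValue_of_le (α := α) hi, one_sub_selfDualChainValue hαn (by omega),
    hAT.2 _ (Nat.sub_le _ _)]
  exact congrArg _ (selfDualChain_two_mul_sub hSn hi)

end SelfDualChain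

lemma HasLevelCuts.isFuzzySelfOrthogonal {F : Type*} [Field F] {m N : ℕ}
    {T : ℕ → Submodule F (Fin m → F)} {β : ℕ → ℝ} {A : (Fin m → F) → ℝ}
    (hAT : HasLevelCuts A β (fun k => T k) N)
    (hβ : ∀ k ≤ N, β k ∈ Icc 0 1) (hβ_one_sub : ∀ k ≤ N, 1 - β k = β (N - k))
    (hT_dual : ∀ k ≤ N, dualSet (T (N - k) : Set (Fin m → F)) = T k)
    (hA : ∃ x y, A x ≠ A y) :
    IsFuzzySelfOrthogonal A := by
  obtain ⟨hrange, hcut⟩ := hAT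
  have hfin : (range A).Finite := ((finite_Iic N).image β).subset hrange
  refine ⟨⟨fun x => ?_, fun γ _ hγ => ?_⟩, ?_, ?_⟩
  · obtain ⟨k, hk, hβk⟩ := hrange (mem_range_self x)
    exact hβk ▸ hβ k hk
  · obtain ⟨x, hx⟩ := exists_levelCut_eq_levelCut_apply hfin hγ
    obtain ⟨k, hk, hβk⟩ := hrange (mem_range_self x)
    exact ⟨T k, by rw [hx, ← hβk, hcut k hk]⟩
  · obtain ⟨x, y, hxy⟩ := hA
    exact (one_lt_ncard hfin).2 ⟨A x, mem_range_self x, A y, mem_range_self y, hxy⟩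
  · intro a ha
    obtain ⟨k, hk, rfl⟩ := hrange ha
    rw [hβ_one_sub k hk, hcut _ (Nat.sub_le N k), hcut k hk, hT_dual k hk]

theorem fuzzySelfDual_of_selfDual_chain_general
    {F : Type} [Field F] {n : ℕ} (hn : 1 ≤ n)
    (C : Submodule F (Fin (2 * n) → F))
    (hC : dualSet (C : Set (Fin (2 * n) → F)) = (C : Set (Fin (2 * n) → F)))
    (s : Fin n → (Fin (2 * n) → F))
    (hli : LinearIndependent F s)
    (hspan : Submodule.span F (Set.range s) = C)
    (S : ℕ → Submodule F (Fin (2 * n) → F))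
    (hS : ∀ i ≤ n, S i = Submodule.span F (s '' {j : Fin n | (j : ℕ) < i}))
    (α : ℕ → ℝ)
    (hα1 : α 0 ≤ 1)
    (hαanti : ∀ i < n, α (i + 1) < α i)
    (hαn : α n = 1 / 2)
    (A : (Fin (2 * n) → F) → ℝ)
    (hA0 : ∀ x ∈ (S 0 : Set (Fin (2 * n) → F)), A x = α 0)
    (hAmid : ∀ i, 1 ≤ i → i ≤ n → ∀ x ∈ (S i : Set (Fin (2 * n) → F)),
      x ∉ (S (i - 1) : Set (Fin (2 * n) → F)) → A x = α i)
    (hAdual : ∀ i, i + 1 ≤ n → ∀ x ∈ dualSet (S i : Set (Fin (2 * n) → F)),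
      x ∉ dualSet (S (i + 1) : Set (Fin (2 * n) → F)) → A x = 1 - α i) :
    IsFuzzySelfDual A ∧
      (∀ i ≤ n, levelCut A (α i) = (S i : Set (Fin (2 * n) → F))) ∧
      (∀ i ≤ n, levelCut A (1 - α i) = dualSet (S i : Set (Fin (2 * n) → F))) := by
  have hSmono : MonotoneOn S (Iic n) := fun i hi j hj hij => by
    rw [hS i hi, hS j hj]
    exact Submodule.span_mono (image_mono fun k hk => lt_of_lt_of_le hk hij)
  have hS0 : S 0 = ⊥ := by simp [hS 0 (Nat.zero_le n)]
  have hSn : S n = C := by simp [hS n le_rfl, ← hspan]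
  have hSn_dual : BilinForm.orthogonal (dotProductBilin F F) (S n) = S n := by
    rw [← SetLike.coe_set_eq, ← dualSet_eq_orthogonal, hSn, hC]
  simp only [dualSet_eq_orthogonal, SetLike.mem_coe] at hAdual
  have hAT := hasLevelCuts_selfDualChain hSmono hS0 hSn_dual hαanti hαn hA0 hAmid hAdual
  have hcutS (i : ℕ) (hi : i ≤ n) := hAT.levelCut_eq_of_le hi
  -- the last basis vector lies in `S n` but not in `S (n - 1)`
  obtain ⟨x, hx⟩ : α n ∈ range A := ⟨s ⟨n - 1, by omega⟩, hAmid n hn le_rfl _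
    (by rw [hS n le_rfl]; exact Submodule.subset_span ⟨_, by simp, rfl⟩)
    (by rw [hS (n - 1) (by omega)]; exact hli.notMem_span_image (by simp))⟩
  have hα0n : α n < α 0 :=
    strictAntiOn_Iic_of_succ_lt hαanti (Nat.zero_le n) self_mem_Iic (by omega)
  refine ⟨⟨hAT.isFuzzySelfOrthogonal
    (fun k => selfDualChainValue_mem_Icc hαanti hαn hα1) (fun k => one_sub_selfDualChainValue hαn)
    (fun k hk => by
      rw [dualSet_eq_orthogonal, orthogonal_selfDualChain dotProductBilin_nondegenerate
        dotProductBilin_isRefl hSn_dual hk])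
    ⟨0, x, by rw [hA0 0 (S 0).zero_mem, hx]; exact hα0n.ne'⟩, α n, ⟨x, hx⟩, ?_⟩, hcutS,
    fun i hi => by rw [hAT.levelCut_one_sub_eq_orthogonal hSn_dual hαn hi, dualSet_eq_orthogonal]⟩
  rw [hcutS n le_rfl, hSn, hC]

/-- given a self-dual `[2n, n]` code `C` over `F_q` with basis
`s 0, …, s (n-1)`, nested subcodes `S i = span(s 0, …, s (i-1))`, and reals
`1 ≥ α 0 > α 1 > ⋯ > α (n-1) > α n = 1/2`, the fuzzy set `A` with `A x = α i` on
`S i ∖ S (i-1)` (and `A 0 = α 0`) and `A x = 1 - α i` on `S i ^⊥ ∖ S (i+1) ^⊥`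
is a fuzzy self-dual code, with `A_{α i} = S i` and `A_{1 - α i} = (S i)^⊥`. -/
theorem fuzzySelfDual_of_selfDual_chain
    {F : Type} [Field F] [Fintype F] {n : ℕ} (hn : 1 ≤ n)
    (C : Submodule F (Fin (2 * n) → F))
    (hC : dualSet (C : Set (Fin (2 * n) → F)) = (C : Set (Fin (2 * n) → F)))
    (s : Fin n → (Fin (2 * n) → F))
    (hli : LinearIndependent F s)
    (hspan : Submodule.span F (Set.range s) = C)
    (S : ℕ → Submodule F (Fin (2 * n) → F))
    (hS : ∀ i ≤ n, S i = Submodule.span F (s '' {j : Fin n | (j : ℕ) < i}))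
    (α : ℕ → ℝ)
    (hα1 : α 0 ≤ 1)
    (hαanti : ∀ i < n, α (i + 1) < α i)
    (hαn : α n = 1 / 2)
    (A : (Fin (2 * n) → F) → ℝ)
    (hA0 : ∀ x ∈ (S 0 : Set (Fin (2 * n) → F)), A x = α 0)
    (hAmid : ∀ i, 1 ≤ i → i ≤ n → ∀ x ∈ (S i : Set (Fin (2 * n) → F)),
      x ∉ (S (i - 1) : Set (Fin (2 * n) → F)) → A x = α i)
    (hAdual : ∀ i, i + 1 ≤ n → ∀ x ∈ dualSet (S i : Set (Fin (2 * n) → F)),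
      x ∉ dualSet (S (i + 1) : Set (Fin (2 * n) → F)) → A x = 1 - α i) :
    IsFuzzySelfDual A ∧
      (∀ i ≤ n, levelCut A (α i) = (S i : Set (Fin (2 * n) → F))) ∧
      (∀ i ≤ n, levelCut A (1 - α i) = dualSet (S i : Set (Fin (2 * n) → F))) :=
  fuzzySelfDual_of_selfDual_chain_general hn C hC s hli hspan S hS α hα1 hαanti hαn A hA0 hAmid
    hAdual
end
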